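/- Let δ ∈ (0,1) and λ ∈ (0,1). If L ≥ ln(2/δ)/√λ, then 1 − δ²·(T_L(T_{1/L}(1/δ)·√(1−λ)))² ≥ 1 − δ², where T_L(x) = cos(L·arccos x) for |x| ≤ 1 and T_a(y) = cosh(a·arcosh y) for y ≥ 1. -/

import Mathlib

/-- Inverse hyperbolic cosine on `[1, ∞)`. -/
noncomputable def arcosh (x : ℝ) : ℝ := Real.log (x + Real.sqrt (x ^ 2 - 1))

/-- Extended Chebyshev function of the first kind with real index `a`:
`cosh (a * arcosh x)` for `x ≥ 1`, and `cos (a * arccos x)` for `|x| ≤ 1`. -/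
noncomputable def T (a x : ℝ) : ℝ :=
  if 1 ≤ x then Real.cosh (a * arcosh x) else Real.cos (a * Real.arccos x)

/-!
With `t = arcosh (1/δ) ≤ log (2/δ)`, the hypothesis on `L` gives `(t/L)² ≤ λ`, so
`T_{1/L}(1/δ) · √(1-λ) = cosh (t/L) · √(1-λ) ≤ e^{λ/2} · e^{-λ/2} = 1`.
On `(-∞, 1]` every `T_a` is bounded by `1` in absolute value, which bounds the failure term by `δ²`.
-/

open Real

lemma Real.arcosh_le_log_two_mul {x : ℝ} (hx : 1 ≤ x) : Real.arcosh x ≤ log (2 * x) := by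
  refine log_le_log (by positivity) ?_
  have : √(x ^ 2 - 1) ≤ x := by
    rw [sqrt_le_left (by linarith)]
    linarith
  linarith

-- `arcosh` and Mathlib's `Real.arcosh` agree definitionally.
lemma T_of_one_le (a : ℝ) {x : ℝ} (hx : 1 ≤ x) : T a x = cosh (a * Real.arcosh x) :=
  if_pos hx

lemma abs_T_le_one (a : ℝ) {x : ℝ} (hx : x ≤ 1) : |T a x| ≤ 1 := by
  by_cases h : 1 ≤ x
  · rw [T_of_one_le a h, le_antisymm hx h]
    simp
  · rw [T, if_neg h]
    exact abs_cos_le_one _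

lemma sqrt_one_sub_le_exp_neg_half (lam : ℝ) : √(1 - lam) ≤ exp (-lam / 2) := by
  rw [exp_half]
  exact sqrt_le_sqrt (by linarith [add_one_le_exp (-lam)])

lemma cosh_mul_sqrt_one_sub_le_one {t lam : ℝ} (ht : t ^ 2 ≤ lam) :
    cosh t * √(1 - lam) ≤ 1 := by
  have hcosh : cosh t ≤ exp (lam / 2) :=
    (cosh_le_exp_half_sq t).trans (exp_le_exp.mpr (by linarith))
  calc cosh t * √(1 - lam)
      ≤ exp (lam / 2) * exp (-lam / 2) :=
        mul_le_mul hcosh (sqrt_one_sub_le_exp_neg_half lam) (sqrt_nonneg _) (exp_pos _).le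
    _ = 1 := by rw [← exp_add, neg_div, add_neg_cancel, exp_zero]

theorem fixed_point_property (δ lam L : ℝ)
    (hδ : δ ∈ Set.Ioo (0:ℝ) 1) (hlam : lam ∈ Set.Ioo (0:ℝ) 1)
    (hL : Real.log (2 / δ) / Real.sqrt lam ≤ L) :
    1 - δ ^ 2 ≤ 1 - δ ^ 2 * (T L (T (1 / L) (1 / δ) * Real.sqrt (1 - lam))) ^ 2 := by
  obtain ⟨hδ0, hδ1⟩ := hδ
  have h1δ : 1 ≤ 1 / δ := by rw [le_div_iff₀ hδ0]; linarith
  have hsqrt_lam : 0 < √lam := sqrt_pos.mpr hlam.1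
  have hL0 : 0 < L := (div_pos (log_pos (by rw [lt_div_iff₀ hδ0]; linarith)) hsqrt_lam).trans_le hL
  set t := Real.arcosh (1 / δ)
  have ht_le : t / L ≤ √lam := by
    rw [div_le_iff₀' hL0]
    calc t ≤ log (2 * (1 / δ)) := Real.arcosh_le_log_two_mul h1δ
      _ = log (2 / δ) := by rw [mul_one_div]
      _ ≤ L * √lam := (div_le_iff₀ hsqrt_lam).mp hL
  have ht_sq : (t / L) ^ 2 ≤ lam :=
    (pow_le_pow_left₀ (div_nonneg (Real.arcosh_nonneg h1δ) hL0.le) ht_le 2).trans_eq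
      (sq_sqrt hlam.1.le)
  have hx : T (1 / L) (1 / δ) * √(1 - lam) ≤ 1 := by
    rw [T_of_one_le _ h1δ, one_div_mul_eq_div]
    exact cosh_mul_sqrt_one_sub_le_one ht_sq
  have hT_sq := (sq_le_one_iff_abs_le_one _).mpr (abs_T_le_one L hx)
  exact sub_le_sub_left (mul_le_of_le_one_right (sq_nonneg δ) hT_sq) 1
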